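/- arXiv:1903.06898 — 3 statements merged into one kernel-verified Lean document; each statement's English description precedes it below -/
import Mathlib

section
/- Let c, n > 0, p ≥ 1, and f(x) = (cn - x²)^{-p}. For x, η ∈ ℝ with |η| ≤ 1 and cn - (|x|+1)² ≥ (cn - x²)/2 > 0, we have f(x+η) - f(x) ≤ 2p·x·(cn - x²)^{-(p+1)}·η + 2^{p+3}·p(p+1)·cn·(cn - x²)^{-(p+2)}. -/
/-!
Write `f y = (cn - y²)^{-p}` and `D = cn - x²`. On `[x - 1, x + 1]` the gap condition gives
`cn - y² ≥ D / 2`, and there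
`f'' y = 2p (cn - y²)^{-(p+2)} ((cn - y²) + 2(p+1) y²) ≤ 4p(p+1) cn (D/2)^{-(p+2)}`.
The bound is then the second-order Taylor estimate
`f (x + η) - f x ≤ f' x η + (sup f'') η² / 2`, obtained from the convexity of
`M (y - x)² / 2 - f y` when `f'' ≤ M`.
-/

theorem ConvexOn.add_mul_sub_le_of_hasDerivAt {S : Set ℝ} {φ : ℝ → ℝ} {x y φ' : ℝ}
    (hφ : ConvexOn ℝ S φ) (hx : x ∈ S) (hy : y ∈ S) (hd : HasDerivAt φ φ' x) :
    φ x + φ' * (y - x) ≤ φ y := by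
  rcases lt_trichotomy x y with hxy | rfl | hyx
  · have h := hφ.le_slope_of_hasDerivAt hx hy hxy hd
    rw [slope_def_field, le_div_iff₀ (sub_pos.mpr hxy)] at h
    linarith
  · simp
  · have h := hφ.slope_le_of_hasDerivAt hy hx hyx hd
    rw [slope_def_field, div_le_iff₀ (sub_pos.mpr hyx)] at h
    linarith

theorem Convex.sub_le_deriv_mul_add_sq_of_hasDerivAt2_le {S : Set ℝ} (hS : Convex ℝ S)
    {f f' f'' : ℝ → ℝ} {M x y : ℝ}
    (hf : ∀ z ∈ S, HasDerivAt f (f' z) z) (hf' : ∀ z ∈ S, HasDerivAt f' (f'' z) z)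
    (hM : ∀ z ∈ S, f'' z ≤ M) (hx : x ∈ S) (hy : y ∈ S) :
    f y - f x ≤ f' x * (y - x) + M / 2 * (y - x) ^ 2 := by
  set φ : ℝ → ℝ := fun z => M / 2 * (z - x) ^ 2 - f z
  have hφ : ∀ z ∈ S, HasDerivAt φ (M * (z - x) - f' z) z := fun z hz => by
    have hsq := (((hasDerivAt_id' z).sub_const x).pow 2).const_mul (M / 2)
    refine (hsq.sub (hf z hz)).congr_deriv ?_
    norm_num
    ring
  have hφ' : ∀ z ∈ S, HasDerivAt (fun z => M * (z - x) - f' z) (M - f'' z) z := fun z hz =>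
    (((hasDerivAt_id' z).sub_const x).const_mul M |>.sub (hf' z hz)).congr_deriv (by rw [mul_one])
  have hconvex : ConvexOn ℝ S φ :=
    convexOn_of_hasDerivWithinAt2_nonneg hS
      (fun z hz => (hφ z hz).continuousAt.continuousWithinAt)
      (fun z hz => (hφ z (interior_subset hz)).hasDerivWithinAt)
      (fun z hz => (hφ' z (interior_subset hz)).hasDerivWithinAt)
      (fun z hz => sub_nonneg.mpr (hM z (interior_subset hz)))
  have h := hconvex.add_mul_sub_le_of_hasDerivAt hx hy (hφ x hx)
  simp only [φ, sub_self] at h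
  linarith

section SubSqRpow

variable {K p y : ℝ}

theorem hasDerivAt_sub_sq_rpow (q : ℝ) (hy : 0 < K - y ^ 2) :
    HasDerivAt (fun z => (K - z ^ 2) ^ q) (-(2 * q * y * (K - y ^ 2) ^ (q - 1))) y := by
  refine (((hasDerivAt_pow 2 y).const_sub K).rpow_const (Or.inl hy.ne')).congr_deriv ?_
  simp only [Nat.cast_ofNat, pow_one, show 2 - 1 = 1 from rfl]
  ring

theorem hasDerivAt_sub_sq_rpow_neg (hy : 0 < K - y ^ 2) :
    HasDerivAt (fun z => (K - z ^ 2) ^ (-p)) (2 * p * y * (K - y ^ 2) ^ (-(p + 1))) y := by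
  refine (hasDerivAt_sub_sq_rpow (-p) hy).congr_deriv ?_
  rw [show -p - 1 = -(p + 1) by ring]
  ring

theorem hasDerivAt_mul_sub_sq_rpow_neg (hy : 0 < K - y ^ 2) :
    HasDerivAt (fun z => 2 * p * z * (K - z ^ 2) ^ (-(p + 1)))
      (2 * p * (K - y ^ 2) ^ (-(p + 1)) + 4 * p * (p + 1) * y ^ 2 * (K - y ^ 2) ^ (-(p + 2)))
      y := by
  refine (((hasDerivAt_id' y).const_mul (2 * p)).mul (hasDerivAt_sub_sq_rpow _ hy)).congr_deriv ?_
  rw [show -(p + 1) - 1 = -(p + 2) by ring]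
  ring

theorem sub_sq_rpow_neg_deriv2_le {D : ℝ} (hp : 0 ≤ p) (hD : 0 < D) (hy : D / 2 ≤ K - y ^ 2) :
    2 * p * (K - y ^ 2) ^ (-(p + 1)) + 4 * p * (p + 1) * y ^ 2 * (K - y ^ 2) ^ (-(p + 2)) ≤
      2 * (2 ^ (p + 3) * p * (p + 1) * K * D ^ (-(p + 2))) := by
  set u := K - y ^ 2
  have hu : 0 < u := by linarith
  have hsplit : u ^ (-(p + 1)) = u * u ^ (-(p + 2)) := by
    rw [show -(p + 1) = 1 + -(p + 2) by ring, Real.rpow_add hu, Real.rpow_one]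
  have hhalf : (D / 2) ^ (-(p + 2)) = 2 ^ (p + 2) * D ^ (-(p + 2)) := by
    rw [Real.div_rpow hD.le zero_le_two, Real.rpow_neg zero_le_two, div_inv_eq_mul, mul_comm]
  have htwo : (2 : ℝ) ^ (p + 3) = 2 ^ (p + 2) * 2 := by
    rw [show p + 3 = p + 2 + 1 by ring, Real.rpow_add_one two_ne_zero]
  calc 2 * p * u ^ (-(p + 1)) + 4 * p * (p + 1) * y ^ 2 * u ^ (-(p + 2))
      = 2 * p * u ^ (-(p + 2)) * (u + 2 * (p + 1) * y ^ 2) := by rw [hsplit]; ring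
    _ ≤ 2 * p * u ^ (-(p + 2)) * (2 * (p + 1) * K) := by
        gcongr
        nlinarith [sq_nonneg y]
    _ ≤ 2 * p * (D / 2) ^ (-(p + 2)) * (2 * (p + 1) * K) := by
        have hmono := Real.rpow_le_rpow_of_nonpos (by positivity) hy (by linarith : -(p + 2) ≤ 0)
        have hK : 0 ≤ 2 * (p + 1) * K := by nlinarith [sq_nonneg y]
        gcongr
    _ = 2 * (2 ^ (p + 3) * p * (p + 1) * K * D ^ (-(p + 2))) := by rw [hhalf, htwo]; ring

end SubSqRpow

theorem sq_le_abs_add_sq {x y r : ℝ} (h : |y - x| ≤ r) : y ^ 2 ≤ (|x| + r) ^ 2 := by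
  have hy : |y| ≤ |x| + r := by linarith [abs_sub_abs_le_abs_sub y x]
  simpa only [sq_abs] using pow_le_pow_left₀ (abs_nonneg y) hy 2

theorem stmt4_general (c n p : ℝ) (hp : 1 ≤ p)
    (f : ℝ → ℝ) (hf : ∀ x, f x = (c * n - x ^ 2) ^ (-p))
    (x η : ℝ) (hη : |η| ≤ 1)
    (hgap : c * n - (|x| + 1) ^ 2 ≥ (c * n - x ^ 2) / 2)
    (hpos : 0 < (c * n - x ^ 2) / 2) :
    f (x + η) - f x ≤
      2 * p * x * (c * n - x ^ 2) ^ (-(p + 1)) * η +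
        2 ^ (p + 3) * p * (p + 1) * (c * n) * (c * n - x ^ 2) ^ (-(p + 2)) := by
  obtain rfl : f = fun z => (c * n - z ^ 2) ^ (-p) := funext hf
  set D := c * n - x ^ 2
  set B := 2 ^ (p + 3) * p * (p + 1) * (c * n) * D ^ (-(p + 2))
  have hgood : ∀ y ∈ Metric.closedBall x 1, D / 2 ≤ c * n - y ^ 2 := fun y hy => by
    linarith [sq_le_abs_add_sq (Real.dist_eq y x ▸ Metric.mem_closedBall.mp hy)]
  have hmem : ∀ t, |t| ≤ 1 → x + t ∈ Metric.closedBall x 1 := fun t ht => by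
    simpa [Real.dist_eq] using ht
  have htaylor := (convex_closedBall x 1).sub_le_deriv_mul_add_sq_of_hasDerivAt2_le
    (fun y hy => hasDerivAt_sub_sq_rpow_neg (by linarith [hgood y hy]))
    (fun y hy => hasDerivAt_mul_sub_sq_rpow_neg (by linarith [hgood y hy]))
    (fun y hy =>
      sub_sq_rpow_neg_deriv2_le (p := p) (D := D) (by linarith) (by linarith) (hgood y hy))
    (hmem 0 (by simp)) (hmem η hη)
  have hB : 0 ≤ B := by
    have : 0 ≤ p := by linarith
    have : 0 < D := by linarith
    have : 0 ≤ c * n := by linarith [sq_nonneg (|x| + 1)]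
    positivity
  have hη2 : η ^ 2 ≤ 1 := (sq_le_one_iff_abs_le_one η).mpr hη
  simp only [add_zero, add_sub_cancel_left] at htaylor
  linarith [mul_le_mul_of_nonneg_left hη2 hB]

/-- Taylor-type bound: for `f x = (cn - x²)^{-p}`, `|η| ≤ 1` and the gap condition
`cn - (|x|+1)² ≥ (cn - x²)/2 > 0`, we have
`f(x+η) - f(x) ≤ 2 p x (cn-x²)^{-(p+1)} η + 2^{p+3} p (p+1) cn (cn-x²)^{-(p+2)}`. -/
theorem stmt4 (c n p : ℝ) (hc : 0 < c) (hn : 0 < n) (hp : 1 ≤ p)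
    (f : ℝ → ℝ) (hf : ∀ x, f x = (c * n - x ^ 2) ^ (-p))
    (x η : ℝ) (hη : |η| ≤ 1)
    (hgap : c * n - (|x| + 1) ^ 2 ≥ (c * n - x ^ 2) / 2)
    (hpos : 0 < (c * n - x ^ 2) / 2) :
    f (x + η) - f x ≤
      2 * p * x * (c * n - x ^ 2) ^ (-(p + 1)) * η +
        2 ^ (p + 3) * p * (p + 1) * (c * n) * (c * n - x ^ 2) ^ (-(p + 2)) :=
  stmt4_general c n p hp f hf x η hη hgap hpos
end

section
/- Let d_1,...,d_n ∈ ℝ, λ > 0, Φ = ∑_{i=1}^n cosh(λ d_i), and suppose Φ ≥ 2n. If v_1,...,v_n are independent uniform ±1 random variables and L = λ·∑_i sinh(λ d_i)·v_i, then Pr[|L| ≥ (λ/(2√n))·Φ] ≥ 1/4. -/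
def rsign (b : Bool) : ℝ := if b then 1 else -1

/-!
Put `a i = λ sinh (λ dᵢ)` and `t = λΦ/(2√n)`. Since `sinh² = cosh² - 1`, Cauchy–Schwarz and
`Φ ≥ 2n` give `∑ aᵢ² ≥ 3t²`, so it suffices that a Rademacher sum `L = ∑ aᵢ vᵢ` of variance at
least `3t²` satisfies `Pr[|L| ≥ t] ≥ 1/4`.

If a set `S` of at most two coefficients has `∑_{i ∈ S} |aᵢ| ≥ t`, re-choosing the signs on `S`
to agree with the sign of the rest of the sum lands in the event, and this map is at most
`2^|S|`-to-one. Otherwise every coefficient but the largest is below `t/2`, and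
`Pr[|L| < t] ≤ E[G(πL/(3t))]` for a trigonometric polynomial `G ≥ 0` with `G ≥ 1` on
`(-π/3, π/3)`. By independence `E[cos(mL)] = ∏ cos(m aᵢ)`, which is at most
`exp(-(2/5) m² ∑ aᵢ²)` when every `|m aᵢ| ≤ π/2`; this makes `E[G(πL/(3t))] < 3/4`.
-/

open Real Finset

lemma mul_rsign_beq_decide (x : ℝ) (b : Bool) :
    x * rsign (b == decide (0 ≤ x)) = |x| * rsign b := by
  rcases le_or_gt 0 x with hx | hx
  · cases b <;> simp [rsign, hx, abs_of_nonneg hx]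
  · cases b <;> simp [rsign, not_le.mpr hx, abs_of_neg hx]

lemma abs_add_rsign_decide_mul (R : ℝ) {T : ℝ} (hT : 0 ≤ T) :
    |R + rsign (decide (0 ≤ R)) * T| = |R| + T := by
  rcases le_or_gt 0 R with hR | hR
  · simp [rsign, hR, abs_of_nonneg, add_nonneg hR hT]
  · simp only [rsign, not_le.mpr hR, decide_false, Bool.false_eq_true, if_false, abs_of_neg hR]
    rw [abs_of_neg (by linarith)]
    ring

lemma cos_le_one_sub_two_fifths_mul_sq {u : ℝ} (hu : |u| ≤ π / 2) :
    cos u ≤ 1 - 2 / 5 * u ^ 2 := by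
  rw [← cos_abs, ← sq_abs]
  set w := |u| / 2 with hw
  have hw0 : 0 ≤ w := by positivity
  have hw1 : w ≤ 63 / 80 := by linarith [pi_lt_d2]
  have hsin : w * (1 - w ^ 2 / 6) ≤ sin w := by nlinarith [sin_ge_sub_cube hw0]
  have hw2 : w ^ 2 ≤ (63 / 80) ^ 2 := pow_le_pow_left₀ hw0 hw1 2
  have hfac : 4 / 5 ≤ (1 - w ^ 2 / 6) ^ 2 := by nlinarith
  have hpos : 0 ≤ w * (1 - w ^ 2 / 6) := by nlinarith
  have hcos : cos |u| = 1 - 2 * sin w ^ 2 := by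
    rw [show |u| = 2 * w by ring, cos_two_mul, cos_sq']
    ring
  rw [hcos, show |u| = 2 * w by ring]
  nlinarith [mul_le_mul hsin hsin hpos (hpos.trans hsin)]

lemma cos_le_exp_neg_two_fifths_mul_sq {u : ℝ} (hu : |u| ≤ π / 2) :
    cos u ≤ exp (-(2 / 5 * u ^ 2)) :=
  (cos_le_one_sub_two_fifths_mul_sq hu).trans (by linarith [add_one_le_exp (-(2 / 5 * u ^ 2))])

lemma exp_neg_le_inv_cubic_of_le {x₀ x : ℝ} (h₀ : 0 ≤ x₀) (h : x₀ ≤ x) :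
    exp (-x) ≤ (1 + x₀ + x₀ ^ 2 / 2 + x₀ ^ 3 / 6)⁻¹ := by
  have hq : 1 + x₀ + x₀ ^ 2 / 2 + x₀ ^ 3 / 6 ≤ exp x₀ := by
    simpa [sum_range_succ, Nat.factorial] using sum_le_exp_of_nonneg h₀ 4
  calc exp (-x) ≤ exp (-x₀) := exp_le_exp.mpr (neg_le_neg h)
    _ = (exp x₀)⁻¹ := exp_neg x₀
    _ ≤ _ := inv_anti₀ (by positivity) hq

/- As a cubic in `cos x` this is nonnegative on `[-1, 1]` and at least `1` on `[1/2, 1]`, while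
its constant Fourier coefficient `57/100` leaves room below `3/4` for the other harmonics. -/
noncomputable def cosMajorant (x : ℝ) : ℝ :=
  57 / 100 + 60 / 100 * cos x + 3 / 100 * cos (2 * x) - 17 / 100 * cos (3 * x)

lemma cosMajorant_eq_cubic (x : ℝ) : cosMajorant x =
    54 / 100 + 111 / 100 * cos x + 6 / 100 * cos x ^ 2 - 68 / 100 * cos x ^ 3 := by
  rw [cosMajorant, cos_two_mul, cos_three_mul]
  ring

lemma cosMajorant_nonneg (x : ℝ) : 0 ≤ cosMajorant x := by
  have h₁ := neg_one_le_cos x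
  have h₂ := cos_le_one x
  rw [cosMajorant_eq_cubic]
  nlinarith [mul_nonneg (by linarith : (0 : ℝ) ≤ 3 / 2 - cos x) (sq_nonneg (cos x + 71 / 100)),
    sq_nonneg (cos x + 2 / 5), sq_nonneg (cos x + 1)]

lemma one_le_cosMajorant {x : ℝ} (hx : |x| < π / 3) : 1 ≤ cosMajorant x := by
  have h₁ : 1 / 2 < cos x := by
    rw [← cos_abs, ← cos_pi_div_three]
    exact cos_lt_cos_of_nonneg_of_le_pi (abs_nonneg x) (by linarith [pi_pos]) hx
  have h₂ := cos_le_one x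
  have h₃ : (0 : ℝ) ≤ 2 * cos x - 1 := by linarith
  rw [cosMajorant_eq_cubic]
  nlinarith [mul_nonneg h₃ (by linarith : 0 ≤ 1 - cos x),
    mul_nonneg (mul_nonneg h₃ (by linarith : 0 ≤ 1 - cos x)) (by linarith : 0 ≤ 1 + cos x),
    mul_nonneg h₃ (sq_nonneg (1 - cos x))]

lemma three_mul_sq_le_sum_sq_mul_sinh {ι : Type*} [Fintype ι] (c : ℝ) (x : ι → ℝ)
    (hΦ : 2 * Fintype.card ι ≤ ∑ i, cosh (x i)) :
    3 * (c / (2 * √(Fintype.card ι)) * ∑ i, cosh (x i)) ^ 2 ≤ ∑ i, (c * sinh (x i)) ^ 2 := by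
  set N : ℝ := (Fintype.card ι : ℝ)
  have hCS : (∑ i, cosh (x i)) ^ 2 ≤ N * ∑ i, cosh (x i) ^ 2 := by
    simpa using sq_sum_le_card_mul_sum_sq (s := univ) (f := fun i => cosh (x i))
  have hsinh : ∑ i, sinh (x i) ^ 2 = ∑ i, cosh (x i) ^ 2 - N := by
    simp [N, cosh_sq, sum_add_distrib]
  have hvar : 3 * (∑ i, cosh (x i)) ^ 2 ≤ 4 * N * ∑ i, sinh (x i) ^ 2 := by
    rw [hsinh]
    nlinarith [(Nat.cast_nonneg (Fintype.card ι) : (0 : ℝ) ≤ N)]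
  rw [div_mul_eq_mul_div, div_pow, mul_pow, mul_pow, sq_sqrt (Nat.cast_nonneg _), ← mul_div_assoc]
  simp only [mul_pow, ← mul_sum]
  refine div_le_of_le_mul₀ (by positivity) (by positivity) ?_
  nlinarith [mul_le_mul_of_nonneg_left hvar (sq_nonneg c)]

section Rademacher

variable {ι : Type*} [Fintype ι]

def rademacherSum (a : ι → ℝ) (ε : ι → Bool) : ℝ := ∑ i, a i * rsign (ε i)

variable [DecidableEq ι]

noncomputable def rademacherTail (a : ι → ℝ) (t : ℝ) : Finset (ι → Bool) :=
  {ε | t ≤ |rademacherSum a ε|}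

lemma two_pow_card_le_two_pow_mul_card_rademacherTail (a : ι → ℝ) {t : ℝ}
    (S : Finset ι) (hS : t ≤ ∑ i ∈ S, |a i|) :
    2 ^ Fintype.card ι ≤ 2 ^ #S * #(rademacherTail a t) := by
  set R : (ι → Bool) → ℝ := fun ε => ∑ i ∈ Sᶜ, a i * rsign (ε i)
  set align : (ι → Bool) → ι → Bool := fun ε i =>
    if i ∈ S then (decide (0 ≤ R ε) == decide (0 ≤ a i)) else ε i
  have hsum (ε) :
      rademacherSum a (align ε) = R ε + rsign (decide (0 ≤ R ε)) * ∑ i ∈ S, |a i| := by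
    rw [rademacherSum, ← sum_add_sum_compl S, mul_sum, add_comm]
    congr 1
    · exact sum_congr rfl fun i hi => by simp [align, mem_compl.mp hi]
    · exact sum_congr rfl fun i hi => by simp [align, hi, mul_rsign_beq_decide, mul_comm]
  have hmaps (ε) : align ε ∈ rademacherTail a t := by
    rw [rademacherTail, mem_filter, hsum,
      abs_add_rsign_decide_mul _ (sum_nonneg fun i _ => abs_nonneg _)]
    exact ⟨mem_univ _, by linarith [abs_nonneg (R ε)]⟩
  have hinj : Set.InjOn (fun ε => (align ε, fun i : S => ε i)) (univ : Finset (ι → Bool)) := by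
    intro ε _ ε' _ h
    simp only [Prod.mk.injEq] at h
    funext i
    by_cases hi : i ∈ S
    · exact congrFun h.2 ⟨i, hi⟩
    · simpa [align, hi] using congrFun h.1 i
  calc 2 ^ Fintype.card ι = #(univ : Finset (ι → Bool)) := by simp
    _ ≤ #(rademacherTail a t ×ˢ (univ : Finset (S → Bool))) :=
      card_le_card_of_injOn _ (fun ε _ => by simpa using hmaps ε) hinj
    _ = 2 ^ #S * #(rademacherTail a t) := by simp [card_product, mul_comm]

lemma sum_cos_mul_rademacherSum (a : ι → ℝ) (m : ℝ) :
    ∑ ε, cos (m * rademacherSum a ε) = 2 ^ Fintype.card ι * ∏ i, cos (m * a i) := by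
  have hexp : ∑ ε : ι → Bool, Complex.exp (↑(m * rademacherSum a ε) * Complex.I)
      = ↑(2 ^ Fintype.card ι * ∏ i, cos (m * a i)) := by
    have hfactor (i : ι) : ∑ b : Bool, Complex.exp (↑(m * a i * rsign b) * Complex.I)
        = ↑(2 * cos (m * a i)) := by
      simp [rsign, Complex.two_cos]
    simp_rw [rademacherSum, mul_sum, ← mul_assoc, Complex.ofReal_sum, sum_mul, Complex.exp_sum,
      ← Fintype.prod_sum (fun i b => Complex.exp (↑(m * a i * rsign b) * Complex.I)), hfactor,
      ← Complex.ofReal_prod, prod_mul_distrib, prod_const, card_univ]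
  have hre := congrArg Complex.re hexp
  simpa only [Complex.re_sum, Complex.ofReal_re, Complex.exp_ofReal_mul_I_re] using hre

lemma abs_prod_cos_le_exp (u : ι → ℝ) (s : Finset ι) (hs : ∀ i ∈ s, |u i| ≤ π / 2) :
    |∏ i, cos (u i)| ≤ exp (-(2 / 5 * ∑ i ∈ s, u i ^ 2)) := by
  have hcos (i) (hi : i ∈ s) : |cos (u i)| = cos (u i) := abs_of_nonneg <|
    cos_nonneg_of_neg_pi_div_two_le_of_le (abs_le.mp (hs i hi)).1 (abs_le.mp (hs i hi)).2
  have hnonneg (i) (hi : i ∈ s) : 0 ≤ cos (u i) := hcos i hi ▸ abs_nonneg _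
  rw [abs_prod, ← prod_mul_prod_compl s, prod_congr rfl hcos, mul_sum, ← sum_neg_distrib,
    exp_sum]
  calc (∏ i ∈ s, cos (u i)) * ∏ i ∈ sᶜ, |cos (u i)|
      ≤ ∏ i ∈ s, cos (u i) :=
        mul_le_of_le_one_right (prod_nonneg hnonneg)
          (prod_le_one (fun _ _ => abs_nonneg _) fun _ _ => abs_cos_le_one _)
    _ ≤ ∏ i ∈ s, exp (-(2 / 5 * u i ^ 2)) :=
        prod_le_prod hnonneg fun i hi => cos_le_exp_neg_two_fifths_mul_sq (hs i hi)

lemma sum_cosMajorant_mul_rademacherSum (a : ι → ℝ) (m : ℝ) :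
    ∑ ε, cosMajorant (m * rademacherSum a ε) = 2 ^ Fintype.card ι * (57 / 100
      + 60 / 100 * ∏ i, cos (m * a i) + 3 / 100 * ∏ i, cos (2 * m * a i)
      - 17 / 100 * ∏ i, cos (3 * m * a i)) := by
  simp only [cosMajorant, ← mul_assoc, sum_sub_distrib, sum_add_distrib, ← mul_sum,
    sum_cos_mul_rademacherSum, sum_const, card_univ, Fintype.card_fun, Fintype.card_bool,
    nsmul_eq_mul]
  push_cast
  ring

lemma card_compl_rademacherTail_le_sum_cosMajorant (a : ι → ℝ) {t β : ℝ} (hβ : 0 < β)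
    (hβt : β * t ≤ π / 3) :
    (#(rademacherTail a t)ᶜ : ℝ) ≤ ∑ ε, cosMajorant (β * rademacherSum a ε) := by
  have hbad (ε) (hε : ε ∈ (rademacherTail a t)ᶜ) :
      1 ≤ cosMajorant (β * rademacherSum a ε) := by
    simp only [rademacherTail, mem_compl, mem_filter, mem_univ, true_and, not_le] at hε
    refine one_le_cosMajorant ?_
    rw [abs_mul, abs_of_pos hβ]
    exact (mul_lt_mul_of_pos_left hε hβ).trans_le hβt
  calc (#(rademacherTail a t)ᶜ : ℝ) = ∑ ε ∈ (rademacherTail a t)ᶜ, 1 := by simp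
    _ ≤ ∑ ε ∈ (rademacherTail a t)ᶜ, cosMajorant (β * rademacherSum a ε) := sum_le_sum hbad
    _ ≤ _ := sum_le_sum_of_subset_of_nonneg (subset_univ _) fun ε _ _ => cosMajorant_nonneg _

lemma sum_cosMajorant_le_of_forall_ne (a : ι → ℝ) {t : ℝ} (ht : 0 < t) (i₀ : ι)
    (hi₀ : |a i₀| ≤ t) (hsmall : ∀ i ≠ i₀, 2 * |a i| ≤ t) (hσ : 3 * t ^ 2 ≤ ∑ i, a i ^ 2) :
    ∑ ε, cosMajorant (π / (3 * t) * rademacherSum a ε) ≤ 3 / 4 * 2 ^ Fintype.card ι := by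
  set β := π / (3 * t) with hβ_def
  have hβ : 0 < β := by positivity
  have hβt : β * t = π / 3 := by rw [hβ_def]; field_simp
  have hπ : 197 / 20 ≤ π ^ 2 := by nlinarith [pi_gt_d2]
  have hle (i : ι) : |a i| ≤ t := by
    by_cases hi : i = i₀
    · exact hi ▸ hi₀
    · linarith [hsmall i hi, abs_nonneg (a i)]
  have hhalf (i : ι) (hi : i ∈ univ.erase i₀) : |a i| ≤ 1 / 2 * t := by
    linarith [hsmall i (ne_of_mem_erase hi)]
  have hrest : 2 * t ^ 2 ≤ ∑ i ∈ univ.erase i₀, a i ^ 2 := by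
    rw [sum_erase_eq_sub (mem_univ _)]
    nlinarith [sq_abs (a i₀), abs_nonneg (a i₀)]
  have hcoord (k c : ℝ) (hk : 0 ≤ k) (i : ι) (hi : |a i| ≤ c * t) :
      |k * β * a i| ≤ k * c * (π / 3) := by
    rw [abs_mul, abs_mul, abs_of_nonneg hk, abs_of_pos hβ, ← hβt]
    nlinarith [mul_le_mul_of_nonneg_left hi (by positivity : 0 ≤ k * β)]
  have hP (k c x₀ : ℝ) (s : Finset ι) (hs : ∀ i ∈ s, |k * β * a i| ≤ π / 2)
      (hc : c * t ^ 2 ≤ ∑ i ∈ s, a i ^ 2) (hx₀ : 0 ≤ x₀)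
      (hk : x₀ ≤ 2 / 45 * k ^ 2 * c * π ^ 2) :
      |∏ i, cos (k * β * a i)| ≤ (1 + x₀ + x₀ ^ 2 / 2 + x₀ ^ 3 / 6)⁻¹ := by
    refine (abs_prod_cos_le_exp _ s hs).trans (exp_neg_le_inv_cubic_of_le hx₀ ?_)
    have hsq : ∑ i ∈ s, (k * β * a i) ^ 2 = k ^ 2 * β ^ 2 * ∑ i ∈ s, a i ^ 2 := by
      rw [mul_sum]
      exact sum_congr rfl fun i _ => by ring
    have hβsq : β ^ 2 * t ^ 2 = π ^ 2 / 9 := by rw [← mul_pow, hβt]; ring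
    rw [hsq]
    nlinarith [mul_le_mul_of_nonneg_left hc (by positivity : 0 ≤ k ^ 2 * β ^ 2)]
  have hP₁ := hP 1 3 (13 / 10) univ
    (fun i _ => by nlinarith [hcoord 1 1 zero_le_one i (by simpa using hle i), pi_pos])
    (by simpa using hσ) (by norm_num) (by nlinarith)
  have hP₂ := hP 2 2 (7 / 2) (univ.erase i₀)
    (fun i hi => by nlinarith [hcoord 2 (1 / 2) zero_le_two i (hhalf i hi), pi_pos])
    hrest (by norm_num) (by nlinarith)
  have hP₃ := hP 3 2 7 (univ.erase i₀)
    (fun i hi => by nlinarith [hcoord 3 (1 / 2) zero_le_three i (hhalf i hi), pi_pos])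
    hrest (by norm_num) (by nlinarith)
  simp only [one_mul] at hP₁
  norm_num at hP₁ hP₂ hP₃
  rw [sum_cosMajorant_mul_rademacherSum, mul_comm]
  gcongr
  linarith [abs_le.mp hP₁, abs_le.mp hP₂, abs_le.mp hP₃]

lemma two_pow_card_le_four_mul_card_rademacherTail_of_forall_ne (a : ι → ℝ) {t : ℝ}
    (ht : 0 < t) (i₀ : ι) (hi₀ : |a i₀| ≤ t) (hsmall : ∀ i ≠ i₀, 2 * |a i| ≤ t)
    (hσ : 3 * t ^ 2 ≤ ∑ i, a i ^ 2) :
    2 ^ Fintype.card ι ≤ 4 * #(rademacherTail a t) := by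
  have hβt : π / (3 * t) * t = π / 3 := by field_simp
  have hbad := (card_compl_rademacherTail_le_sum_cosMajorant a (by positivity) hβt.le).trans
    (sum_cosMajorant_le_of_forall_ne a ht i₀ hi₀ hsmall hσ)
  have htot : (#(rademacherTail a t) : ℝ) + #(rademacherTail a t)ᶜ = 2 ^ Fintype.card ι := by
    exact_mod_cast (card_add_card_compl _).trans (by simp)
  have : (2 : ℝ) ^ Fintype.card ι ≤ 4 * #(rademacherTail a t) := by linarith
  exact_mod_cast this

theorem two_pow_card_le_four_mul_card_rademacherTail (a : ι → ℝ) {t : ℝ}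
    (hσ : 3 * t ^ 2 ≤ ∑ i, a i ^ 2) : 2 ^ Fintype.card ι ≤ 4 * #(rademacherTail a t) := by
  rcases le_or_gt t 0 with ht | ht
  · have htail : rademacherTail a t = univ :=
      filter_true_of_mem fun ε _ => ht.trans (abs_nonneg _)
    rw [htail, card_univ, Fintype.card_fun, Fintype.card_bool]
    omega
  have : Nonempty ι := by
    by_contra h
    rw [not_nonempty_iff] at h
    simp only [univ_eq_empty, sum_empty] at hσ
    nlinarith
  obtain ⟨i₀, hi₀⟩ := Finite.exists_max fun i => |a i|
  have hS (S : Finset ι) (hS2 : #S ≤ 2) (hS : t ≤ ∑ i ∈ S, |a i|) :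
      2 ^ Fintype.card ι ≤ 4 * #(rademacherTail a t) :=
    (two_pow_card_le_two_pow_mul_card_rademacherTail a S hS).trans
      (Nat.mul_le_mul_right _ (Nat.pow_le_pow_right two_pos hS2))
  by_cases h₁ : t ≤ |a i₀|
  · exact hS {i₀} (by simp) (by simpa using h₁)
  by_cases h₂ : ∃ j ≠ i₀, t ≤ |a i₀| + |a j|
  · obtain ⟨j, hj, hjt⟩ := h₂
    exact hS {i₀, j} card_le_two (by rwa [sum_pair hj.symm])
  push Not at h₁ h₂
  exact two_pow_card_le_four_mul_card_rademacherTail_of_forall_ne a ht i₀ h₁.le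
    (fun i hi => by linarith [h₂ i hi, hi₀ i]) hσ

end Rademacher

theorem stmt8_general (n : ℕ) (d : Fin n → ℝ) (lam : ℝ)
    (hΦ : (2 * n : ℝ) ≤ ∑ i, Real.cosh (lam * d i)) :
    (((Finset.univ.filter (fun ε : Fin n → Bool =>
        lam / (2 * Real.sqrt n) * (∑ i, Real.cosh (lam * d i)) ≤
          |lam * ∑ i, Real.sinh (lam * d i) * rsign (ε i)|)).card : ℝ) / 2 ^ n)
      ≥ 1 / 4 := by
  set a : Fin n → ℝ := fun i => lam * sinh (lam * d i)
  set t := lam / (2 * √n) * ∑ i, cosh (lam * d i)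
  have htail : Finset.univ.filter (fun ε : Fin n → Bool =>
      t ≤ |lam * ∑ i, sinh (lam * d i) * rsign (ε i)|) = rademacherTail a t := by
    simp only [rademacherTail, rademacherSum, a, mul_sum, mul_assoc]
  have hσ : 3 * t ^ 2 ≤ ∑ i, a i ^ 2 := by
    simpa using three_mul_sq_le_sum_sq_mul_sinh lam (fun i => lam * d i) (by simpa using hΦ)
  have hmain : (2 : ℝ) ^ n ≤ 4 * #(rademacherTail a t) := by
    exact_mod_cast Fintype.card_fin n ▸ two_pow_card_le_four_mul_card_rademacherTail a hσ
  rw [htail, ge_iff_le, le_div_iff₀ (by positivity)]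
  linarith

/-- If `Φ = ∑ cosh (λ d i) ≥ 2n` and `L = λ ∑ sinh (λ d i) v i` with `v i`
independent uniform ±1 signs, then `Pr[|L| ≥ (λ/(2√n)) Φ] ≥ 1/4`. -/
theorem stmt8 (n : ℕ) (hn : 1 ≤ n) (d : Fin n → ℝ) (lam : ℝ) (hlam : 0 < lam)
    (hΦ : (2 * n : ℝ) ≤ ∑ i, Real.cosh (lam * d i)) :
    (((Finset.univ.filter (fun ε : Fin n → Bool =>
        lam / (2 * Real.sqrt n) * (∑ i, Real.cosh (lam * d i)) ≤
          |lam * ∑ i, Real.sinh (lam * d i) * rsign (ε i)|)).card : ℝ) / 2 ^ n)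
      ≥ 1 / 4 :=
  stmt8_general n d lam hΦ
end

section
/- Let a_1,...,a_m be reals with |a_i| ≥ 1 for all i, and let Y_1,...,Y_m be independent uniform ±1 random variables. Then for any interval I of length 2, Pr[∑_i a_i Y_i ∈ I] ≤ C(m, ⌊m/2⌋)/2^m. -/
open Finset

section SignedSum

variable {ι : Type*} [Fintype ι] [DecidableEq ι]

def signedSum (w : ι → ℝ) (S : Finset ι) : ℝ :=
  ∑ i, if i ∈ S then w i else -w i

theorem signedSum_add_two_le_of_ssubset {w : ι → ℝ} (hw : ∀ i, 1 ≤ w i) {S T : Finset ι}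
    (hST : S ⊂ T) : signedSum w S + 2 ≤ signedSum w T := by
  obtain ⟨j, hjT, hjS⟩ := exists_of_ssubset hST
  have hterm : ∀ i ∈ univ,
      0 ≤ (if i ∈ T then w i else -w i) - (if i ∈ S then w i else -w i) := by
    intro i _
    by_cases hiS : i ∈ S
    · simp [hiS, hST.subset hiS]
    · split_ifs <;> linarith [hw i]
  have hj : 2 ≤ (if j ∈ T then w j else -w j) - (if j ∈ S then w j else -w j) := by
    simp only [hjT, hjS, if_true, if_false]
    linarith [hw j]
  have := hj.trans (single_le_sum hterm (mem_univ j))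
  rw [sum_sub_distrib] at this
  unfold signedSum
  linarith

theorem isAntichain_signedSum_mem_Ioo {w : ι → ℝ} (hw : ∀ i, 1 ≤ w i) (t : ℝ) :
    IsAntichain (· ⊆ ·) {S : Finset ι | signedSum w S ∈ Set.Ioo t (t + 2)} := by
  intro S hS T hT hne hST
  have := signedSum_add_two_le_of_ssubset hw (hST.ssubset_of_ne hne)
  linarith [hS.1, hT.2]

theorem card_signedSum_mem_Ioo_le_choose {w : ι → ℝ} (hw : ∀ i, 1 ≤ w i) (t : ℝ) :
    #{S : Finset ι | signedSum w S ∈ Set.Ioo t (t + 2)} ≤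
      (Fintype.card ι).choose (Fintype.card ι / 2) :=
  IsAntichain.sperner (by simpa using isAntichain_signedSum_mem_Ioo hw t)

end SignedSum

theorem abs_rsign (b : Bool) : |rsign b| = 1 := by
  cases b <;> simp [rsign]

section SignVectors

variable {ι : Type*} [Fintype ι]

noncomputable def positiveTerms (a : ι → ℝ) (ε : ι → Bool) : Finset ι :=
  {i | 0 < a i * rsign (ε i)}

theorem sum_mul_rsign_eq_signedSum [DecidableEq ι] (a : ι → ℝ) (ε : ι → Bool) :
    ∑ i, a i * rsign (ε i) = signedSum (fun i => |a i|) (positiveTerms a ε) := by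
  refine sum_congr rfl fun i _ => ?_
  have h := abs_mul (a i) (rsign (ε i))
  rw [abs_rsign, mul_one] at h
  by_cases hpos : 0 < a i * rsign (ε i)
  · simp [positiveTerms, hpos, ← h, abs_of_pos hpos]
  · simp [positiveTerms, hpos, ← h, abs_of_nonpos (not_lt.mp hpos)]

theorem positiveTerms_injective {a : ι → ℝ} (ha : ∀ i, a i ≠ 0) :
    Function.Injective (positiveTerms a) := by
  intro ε δ h
  funext i
  have hi : 0 < a i * rsign (ε i) ↔ 0 < a i * rsign (δ i) := by
    simpa [positiveTerms] using congrArg (i ∈ ·) h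
  rcases (ha i).lt_or_gt with hneg | hpos <;>
    cases hε : ε i <;> cases hδ : δ i <;> simp_all [rsign] <;> linarith

end SignVectors

/-- Erdős's anti-concentration lemma: if `|a i| ≥ 1` for all `i`, then for any
open interval of length `2`, `Pr[∑ a i Y i ∈ I] ≤ C(m, ⌊m/2⌋)/2^m` for
independent uniform ±1 signs `Y i`. -/
theorem stmt16 (m : ℕ) (a : Fin m → ℝ) (ha : ∀ i, 1 ≤ |a i|) (t : ℝ) :
    (((Finset.univ.filter (fun ε : Fin m → Bool =>
        (∑ i, a i * rsign (ε i)) ∈ Set.Ioo t (t + 2))).card : ℝ) / 2 ^ m) ≤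
      (m.choose (m / 2) : ℝ) / 2 ^ m := by
  have ha₀ : ∀ i, a i ≠ 0 := fun i => abs_pos.mp (one_pos.trans_le (ha i))
  have hcard : #{ε : Fin m → Bool | ∑ i, a i * rsign (ε i) ∈ Set.Ioo t (t + 2)} ≤
      #{S : Finset (Fin m) | signedSum (fun i => |a i|) S ∈ Set.Ioo t (t + 2)} := by
    refine card_le_card_of_injOn (positiveTerms a) (fun ε hε => ?_)
      ((positiveTerms_injective ha₀).injOn)
    simpa [sum_mul_rsign_eq_signedSum] using hε
  have hsperner := card_signedSum_mem_Ioo_le_choose ha t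
  rw [Fintype.card_fin] at hsperner
  gcongr
  exact_mod_cast hcard.trans hsperner
end
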